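/- arXiv:2506.08705 — 2 statements merged into one kernel-verified Lean document; each statement's English description precedes it below -/
import Mathlib

section
/- Let V = ℝ[k₀,0] ⊕ ⊕_{μ∈ℳ} ℝ[k_μ,μ] and W = ℝ[l₀,0] ⊕ ⊕_{μ∈ℳ} ℝ[l_μ,μ] be finite-dimensional orthogonal torus representations (k₀,l₀,k_μ,l_μ ∈ ℕ₀, all but finitely many k_μ, l_μ zero). Then for every μ ∈ ℳ and every N ∈ ℕ, the coefficient at χ_𝕋(𝕋/H_μ⁺) of the Euler-ring element χ_𝕋(S^V)^N ⋆ (χ_𝕋(S^W)^N − 𝕀) equals (−1)^{k₀N} · N · ( (−1)^{l₀N+1} l_μ − ((−1)^{l₀N} − 1) k_μ ). -/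
/-!
STATEMENT 6 (Lemma `codim1-coeff`, equation (2.5) of the paper).

The Euler ring `U(𝕋)` of the torus `𝕋` is modelled as the free ℤ-module
`Sub →₀ ℤ` on the closed subgroups of `𝕋` (the generator corresponding to `H` is
`Finsupp.single H 1 = χ_𝕋(𝕋/H⁺)`), with multiplication `eulerMul` determined by
`χ_𝕋(𝕋/H⁺) ⋆ χ_𝕋(𝕋/H'⁺) = χ_𝕋(𝕋/(H∩H')⁺)` if
`dim H + dim H' = dim 𝕋 + dim (H∩H')` and `Θ = 0` otherwise; the unit is
`𝕀 = χ_𝕋(𝕋/𝕋⁺) = Finsupp.single top 1`.  The coefficient of `x ∈ U(𝕋)` at the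
generator `χ_𝕋(𝕋/K⁺)` is the `Finsupp` value `x K`.

The representations `V = ℝ[k₀,0] ⊕ ⊕_{μ∈ℳ} ℝ[k_μ,μ]` and
`W = ℝ[l₀,0] ⊕ ⊕_{μ∈ℳ} ℝ[l_μ,μ]` enter through the elements
`a = χ_𝕋(S^V)` and `b = χ_𝕋(S^W)` of `U(𝕋)`, which by Theorem `UTnmult` admit the
expansions `a = (−1)^{k₀}(𝕀 − Σ k_μ χ_𝕋(𝕋/H_μ⁺)) + 𝒪`,
`b = (−1)^{l₀}(𝕀 − Σ l_μ χ_𝕋(𝕋/H_μ⁺)) + 𝒪` (hypotheses `ha`, `hb`).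

Conclusion: for every `μ ∈ ℳ` and `N ∈ ℕ`, the coefficient at `χ_𝕋(𝕋/H_μ⁺)` of
`χ_𝕋(S^V)^N ⋆ (χ_𝕋(S^W)^N − 𝕀)` equals
`(−1)^{k₀N} · N · ((−1)^{l₀N+1} l_μ − ((−1)^{l₀N} − 1) k_μ)`.
-/

/-- The Euler-ring multiplication of a torus on the free ℤ-module on the set of
closed subgroups. -/
noncomputable def eulerMul {Sub : Type*} (dimT : ℕ) (dim : Sub → ℕ)
    (inter : Sub → Sub → Sub) (x y : Sub →₀ ℤ) : Sub →₀ ℤ :=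
  x.sum fun H a => y.sum fun K b =>
    if dim H + dim K = dimT + dim (inter H K)
    then Finsupp.single (inter H K) (a * b) else 0

/-- Powers in the Euler ring (`x^0 = 𝕀 = χ_𝕋(𝕋/𝕋⁺)`). -/
noncomputable def eulerPow {Sub : Type*} (dimT : ℕ) (dim : Sub → ℕ)
    (inter : Sub → Sub → Sub) (top : Sub) (x : Sub →₀ ℤ) : ℕ → (Sub →₀ ℤ)
  | 0 => Finsupp.single top 1
  | n + 1 => eulerMul dimT dim inter x (eulerPow dimT dim inter top x n)

/-- `lowDim dimT dim y` : `y` is a ℤ-linear combination of generators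
`χ_𝕋(𝕋/H⁺)` with `dim H ≤ dim 𝕋 − 2`. -/
def lowDim {Sub : Type*} (dimT : ℕ) (dim : Sub → ℕ) (y : Sub →₀ ℤ) : Prop :=
  ∀ H ∈ y.support, dim H + 2 ≤ dimT

section Aux
variable {Sub : Type*} {dimT : ℕ} {dim : Sub → ℕ} {inter : Sub → Sub → Sub}

lemma eulerMul_add_left (x x' y : Sub →₀ ℤ) :
    eulerMul dimT dim inter (x + x') y
      = eulerMul dimT dim inter x y + eulerMul dimT dim inter x' y := by
  unfold eulerMul
  refine Finsupp.sum_add_index' (fun H => ?_) (fun H a a' => ?_)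
  · simp
  · rw [← Finsupp.sum_add]
    refine Finsupp.sum_congr fun K _ => ?_
    split <;> simp [add_mul, Finsupp.single_add]

lemma eulerMul_add_right (x y y' : Sub →₀ ℤ) :
    eulerMul dimT dim inter x (y + y')
      = eulerMul dimT dim inter x y + eulerMul dimT dim inter x y' := by
  unfold eulerMul
  rw [← Finsupp.sum_add]
  refine Finsupp.sum_congr fun H _ => ?_
  refine Finsupp.sum_add_index' (fun K => ?_) (fun K b b' => ?_)
  · simp
  · split <;> simp [mul_add, Finsupp.single_add]

lemma eulerMul_smul_left (s : ℤ) (x y : Sub →₀ ℤ) :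
    eulerMul dimT dim inter (s • x) y = s • eulerMul dimT dim inter x y := by
  unfold eulerMul
  rw [Finsupp.sum_smul_index (fun H => by simp), Finsupp.smul_sum]
  refine Finsupp.sum_congr fun H _ => ?_
  rw [Finsupp.smul_sum]
  refine Finsupp.sum_congr fun K _ => ?_
  split <;> [skip; simp]
  rw [Finsupp.smul_single]; congr 1; rw [smul_eq_mul]; ring

lemma eulerMul_smul_right (s : ℤ) (x y : Sub →₀ ℤ) :
    eulerMul dimT dim inter x (s • y) = s • eulerMul dimT dim inter x y := by
  unfold eulerMul
  rw [Finsupp.smul_sum]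
  refine Finsupp.sum_congr fun H _ => ?_
  rw [Finsupp.sum_smul_index (fun K => by simp), Finsupp.smul_sum]
  refine Finsupp.sum_congr fun K _ => ?_
  split <;> [skip; simp]
  rw [Finsupp.smul_single]; congr 1; rw [smul_eq_mul]; ring

end Aux

section Aux2
variable {Sub : Type*} {dimT : ℕ} {dim : Sub → ℕ} {inter : Sub → Sub → Sub}

lemma eulerMul_one_left {top : Sub} (hdimtop : dim top = dimT)
    (hinter_top : ∀ H, inter top H = H) (z : Sub →₀ ℤ) :
    eulerMul dimT dim inter (Finsupp.single top 1) z = z := by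
  unfold eulerMul
  rw [Finsupp.sum_single_index (by simp)]
  have : ∀ K, inter top K = K := hinter_top
  rw [show (fun (K : Sub) (b : ℤ) =>
      if dim top + dim K = dimT + dim (inter top K)
      then Finsupp.single (inter top K) (1 * b) else 0)
    = fun K b => Finsupp.single K b by
      funext K b; rw [hinter_top, hdimtop, one_mul, if_pos rfl]]
  exact Finsupp.sum_single z

lemma eulerMul_one_right {top : Sub} (hdimtop : dim top = dimT)
    (hinter_top' : ∀ H, inter H top = H) (z : Sub →₀ ℤ) :
    eulerMul dimT dim inter z (Finsupp.single top 1) = z := by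
  unfold eulerMul
  rw [show (fun (H : Sub) (a : ℤ) => (Finsupp.single top 1).sum fun K b =>
      if dim H + dim K = dimT + dim (inter H K)
      then Finsupp.single (inter H K) (a * b) else 0)
    = fun H a => Finsupp.single H a by
      funext H a
      rw [Finsupp.sum_single_index (by simp)]
      rw [hinter_top', hdimtop, mul_one, if_pos (Nat.add_comm _ _)]]
  exact Finsupp.sum_single z

lemma lowDim_mul_aux {x y : Sub →₀ ℤ}
    (h : ∀ H ∈ x.support, ∀ K ∈ y.support,
      dim H + dim K = dimT + dim (inter H K) → dim (inter H K) + 2 ≤ dimT) :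
    lowDim dimT dim (eulerMul dimT dim inter x y) := by
  classical
  intro L hL
  obtain ⟨H, hH, hL1⟩ := Finset.mem_biUnion.mp (Finsupp.support_sum hL)
  obtain ⟨K, hK, hL2⟩ := Finset.mem_biUnion.mp (Finsupp.support_sum hL1)
  by_cases hc : dim H + dim K = dimT + dim (inter H K)
  · rw [if_pos hc] at hL2
    have := Finsupp.support_single_subset hL2
    rw [Finset.mem_singleton] at this
    subst this
    exact h H hH K hK hc
  · rw [if_neg hc] at hL2
    simp at hL2

lemma lowDim_mul_left (hl : ∀ H K, dim (inter H K) ≤ dim H) {x : Sub →₀ ℤ}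
    (hx : lowDim dimT dim x) (y : Sub →₀ ℤ) :
    lowDim dimT dim (eulerMul dimT dim inter x y) :=
  lowDim_mul_aux fun H hH K _ _ => le_trans (by have := hl H K; omega) (hx H hH)

lemma lowDim_mul_right (hr : ∀ H K, dim (inter H K) ≤ dim K) {y : Sub →₀ ℤ}
    (x : Sub →₀ ℤ) (hy : lowDim dimT dim y) :
    lowDim dimT dim (eulerMul dimT dim inter x y) :=
  lowDim_mul_aux fun H _ K hK _ => le_trans (by have := hr H K; omega) (hy K hK)

lemma lowDim_mul_codim1 {x y : Sub →₀ ℤ}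
    (hx : ∀ H ∈ x.support, dim H + 1 ≤ dimT)
    (hy : ∀ K ∈ y.support, dim K + 1 ≤ dimT) :
    lowDim dimT dim (eulerMul dimT dim inter x y) :=
  lowDim_mul_aux fun H hH K hK hc => by
    have := hx H hH; have := hy K hK; omega

lemma lowDim_add {x y : Sub →₀ ℤ} (hx : lowDim dimT dim x)
    (hy : lowDim dimT dim y) : lowDim dimT dim (x + y) := by
  classical
  intro H hH
  rcases Finset.mem_union.mp (Finsupp.support_add hH) with h | h
  exacts [hx H h, hy H h]

lemma lowDim_smul (s : ℤ) {x : Sub →₀ ℤ} (hx : lowDim dimT dim x) :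
    lowDim dimT dim (s • x) := fun H hH =>
  hx H (Finsupp.support_smul hH)

lemma lowDim_zero : lowDim dimT dim (0 : Sub →₀ ℤ) := by
  intro H hH; simp at hH

end Aux2

def NF {Sub Mw : Type*} (dimT : ℕ) (dim : Sub → ℕ) (top : Sub)
    (Hsub : Mw → Sub) (x : Sub →₀ ℤ) (s : ℤ) (c : Mw →₀ ℤ) : Prop :=
  ∃ O, lowDim dimT dim O ∧
    x = s • Finsupp.single top 1 + Finsupp.mapDomain Hsub c + O

section NFsec
variable {Sub Mw : Type*} {dimT : ℕ} {dim : Sub → ℕ} {inter : Sub → Sub → Sub}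
  {top : Sub} {Hsub : Mw → Sub}
  (hinter_left : ∀ H K, dim (inter H K) ≤ dim H)
  (hinter_right : ∀ H K, dim (inter H K) ≤ dim K)
  (hdimtop : dim top = dimT)
  (hinter_top : ∀ H, inter top H = H) (hinter_top' : ∀ H, inter H top = H)
  (hHsub : ∀ ν, dim (Hsub ν) + 1 = dimT)

include hHsub in
lemma codim1_support {c : Mw →₀ ℤ} {O : Sub →₀ ℤ} (hO : lowDim dimT dim O) :
    ∀ H ∈ (Finsupp.mapDomain Hsub c + O).support, dim H + 1 ≤ dimT := by
  classical
  intro H hH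
  rcases Finset.mem_union.mp (Finsupp.support_add hH) with h | h
  · obtain ⟨ν, -, rfl⟩ := Finset.mem_image.mp (Finsupp.mapDomain_support h)
    exact le_of_eq (hHsub ν)
  · have := hO H h; omega

include hinter_left hinter_right hdimtop hinter_top hinter_top' hHsub in
lemma NF_mul {x y : Sub →₀ ℤ} {s t : ℤ} {c d : Mw →₀ ℤ}
    (hx : NF dimT dim top Hsub x s c) (hy : NF dimT dim top Hsub y t d) :
    NF dimT dim top Hsub (eulerMul dimT dim inter x y) (s * t) (t • c + s • d) := by
  obtain ⟨O₁, hO₁, hxe⟩ := hx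
  obtain ⟨O₂, hO₂, hye⟩ := hy
  set T : Sub →₀ ℤ := Finsupp.single top 1 with hT
  set P : Sub →₀ ℤ := Finsupp.mapDomain Hsub c + O₁ with hP
  set Q : Sub →₀ ℤ := Finsupp.mapDomain Hsub d + O₂ with hQ
  have hx' : x = s • T + P := by rw [hxe, add_assoc]
  have hy' : y = t • T + Q := by rw [hye, add_assoc]
  refine ⟨t • O₁ + s • O₂ + eulerMul dimT dim inter P Q, ?_, ?_⟩
  · exact lowDim_add (lowDim_add (lowDim_smul _ hO₁) (lowDim_smul _ hO₂))
      (lowDim_mul_codim1 (codim1_support hHsub hO₁) (codim1_support hHsub hO₂))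
  · rw [hx', hy', eulerMul_add_left, eulerMul_smul_left,
      eulerMul_one_left hdimtop hinter_top, eulerMul_add_right,
      eulerMul_smul_right, eulerMul_one_right hdimtop hinter_top',
      Finsupp.mapDomain_add, Finsupp.mapDomain_smul, Finsupp.mapDomain_smul,
      hP, hQ]
    rw [smul_add, smul_add, smul_add, mul_smul]
    abel

include hinter_left hinter_right hdimtop hinter_top hinter_top' hHsub in
lemma NF_pow {x : Sub →₀ ℤ} {s₁ : ℤ} {e : Mw →₀ ℤ}
    (hx : NF dimT dim top Hsub x s₁ (s₁ • e)) (n : ℕ) :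
    NF dimT dim top Hsub (eulerPow dimT dim inter top x n)
      (s₁ ^ n) (((n : ℤ) * s₁ ^ n) • e) := by
  induction n with
  | zero =>
      refine ⟨0, lowDim_zero, ?_⟩
      simp [eulerPow]
  | succ n ih =>
      have h := NF_mul hinter_left hinter_right hdimtop hinter_top hinter_top'
        hHsub hx ih
      have hs : s₁ * s₁ ^ n = s₁ ^ (n + 1) := (pow_succ' s₁ n).symm
      have hsc : s₁ ^ n * s₁ + s₁ * ((n : ℤ) * s₁ ^ n)
          = (((n + 1 : ℕ) : ℤ)) * (s₁ * s₁ ^ n) := by push_cast; ring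
      have hc : s₁ ^ n • s₁ • e + s₁ • (((n : ℤ) * s₁ ^ n) • e)
          = ((((n + 1 : ℕ) : ℤ)) * (s₁ * s₁ ^ n)) • e := by
        rw [smul_smul, smul_smul, ← add_smul, hsc]
      rw [show eulerPow dimT dim inter top x (n + 1)
          = eulerMul dimT dim inter x (eulerPow dimT dim inter top x n) from rfl]
      rw [← hs, ← hc]
      exact h

lemma NF_sub_one {y : Sub →₀ ℤ} {t : ℤ} {d : Mw →₀ ℤ}
    (hy : NF dimT dim top Hsub y t d) :
    NF dimT dim top Hsub (y - Finsupp.single top 1) (t - 1) d := by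
  obtain ⟨O, hO, hye⟩ := hy
  refine ⟨O, hO, ?_⟩
  rw [hye, sub_smul, one_smul]
  abel

end NFsec

theorem statement6
    -- the closed subgroups of the torus 𝕋, their dimensions and intersections
    (Sub : Type*) (dimT : ℕ) (dim : Sub → ℕ) (hdim : ∀ H, dim H ≤ dimT)
    (inter : Sub → Sub → Sub)
    (hinter_left : ∀ H K, dim (inter H K) ≤ dim H)
    (hinter_right : ∀ H K, dim (inter H K) ≤ dim K)
    (top : Sub) (hdimtop : dim top = dimT)
    (hinter_top : ∀ H, inter top H = H) (hinter_top' : ∀ H, inter H top = H)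
    -- ℳ: the chosen set of nonzero weights (one of each pair ±μ)
    (Mw : Type*)
    -- μ ↦ H_μ = {exp(φ) : μ(φ) ∈ 2πℤ}, the codimension-one isotropy subgroups
    (Hsub : Mw → Sub)
    (hHsub : ∀ ν, dim (Hsub ν) + 1 = dimT)
    (hHsubInj : Function.Injective Hsub)
    -- multiplicities of V = ℝ[k₀,0] ⊕ ⊕_{μ∈ℳ} ℝ[k_μ,μ] and W = ℝ[l₀,0] ⊕ ⊕ ℝ[l_μ,μ]
    (k₀ l₀ : ℕ) (k l : Mw →₀ ℕ)
    -- a = χ_𝕋(S^V), b = χ_𝕋(S^W), with their expansions from Theorem UTnmult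
    (a b : Sub →₀ ℤ)
    (ha : ∃ O : Sub →₀ ℤ, lowDim dimT dim O ∧
      a = (-1 : ℤ) ^ k₀ • (Finsupp.single top 1
        - k.sum fun ν n => (n : ℤ) • Finsupp.single (Hsub ν) 1) + O)
    (hb : ∃ O : Sub →₀ ℤ, lowDim dimT dim O ∧
      b = (-1 : ℤ) ^ l₀ • (Finsupp.single top 1
        - l.sum fun ν n => (n : ℤ) • Finsupp.single (Hsub ν) 1) + O)
    (μ : Mw) (N : ℕ) (hN : 0 < N) :
    (eulerMul dimT dim inter (eulerPow dimT dim inter top a N)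
        (eulerPow dimT dim inter top b N - Finsupp.single top 1)) (Hsub μ)
      = (-1 : ℤ) ^ (k₀ * N) * (N : ℤ) *
          ((-1 : ℤ) ^ (l₀ * N + 1) * (l μ : ℤ)
            - ((-1 : ℤ) ^ (l₀ * N) - 1) * (k μ : ℤ)) := by
  classical
  obtain ⟨O₁, hO₁, haeq⟩ := ha
  obtain ⟨O₂, hO₂, hbeq⟩ := hb
  set s₁ : ℤ := (-1 : ℤ) ^ k₀ with hs₁
  set t₁ : ℤ := (-1 : ℤ) ^ l₀ with ht₁
  set kZ : Mw →₀ ℤ := k.mapRange (Nat.cast : ℕ → ℤ) Nat.cast_zero with hkZ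
  set lZ : Mw →₀ ℤ := l.mapRange (Nat.cast : ℕ → ℤ) Nat.cast_zero with hlZ
  have hmap : ∀ m : Mw →₀ ℕ,
      (m.sum fun ν n => (n : ℤ) • Finsupp.single (Hsub ν) 1)
        = Finsupp.mapDomain Hsub (m.mapRange (Nat.cast : ℕ → ℤ) Nat.cast_zero) := by
    intro m
    rw [Finsupp.mapDomain, Finsupp.sum_mapRange_index (fun _ => Finsupp.single_zero _)]
    refine Finsupp.sum_congr fun ν _ => ?_
    rw [Finsupp.smul_single, smul_eq_mul, mul_one]
  have hmdneg : ∀ v : Mw →₀ ℤ,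
      Finsupp.mapDomain Hsub (-v) = - Finsupp.mapDomain Hsub v := fun v => by
    rw [← neg_one_smul ℤ v, Finsupp.mapDomain_smul, neg_one_smul]
  have hNFa : NF dimT dim top Hsub a s₁ (s₁ • (-kZ)) := by
    refine ⟨O₁, hO₁, ?_⟩
    rw [haeq, hmap k, ← hkZ, Finsupp.mapDomain_smul, hmdneg,
      smul_sub, sub_eq_add_neg, ← smul_neg]
  have hNFb : NF dimT dim top Hsub b t₁ (t₁ • (-lZ)) := by
    refine ⟨O₂, hO₂, ?_⟩
    rw [hbeq, hmap l, ← hlZ, Finsupp.mapDomain_smul, hmdneg,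
      smul_sub, sub_eq_add_neg, ← smul_neg]
  have hA := NF_pow hinter_left hinter_right hdimtop hinter_top hinter_top'
    hHsub (inter := inter) hNFa N
  have hB := NF_pow hinter_left hinter_right hdimtop hinter_top hinter_top'
    hHsub (inter := inter) hNFb N
  have hB' := NF_sub_one hB
  have hprod := NF_mul hinter_left hinter_right hdimtop hinter_top hinter_top'
    hHsub hA hB'
  obtain ⟨O, hO, heq⟩ := hprod
  have htopne : top ≠ Hsub μ := by
    intro h
    have h1 := hHsub μ
    rw [← h, hdimtop] at h1
    omega
  have hOμ : O (Hsub μ) = 0 := by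
    by_contra h
    have h1 := hO (Hsub μ) (Finsupp.mem_support_iff.mpr h)
    have h2 := hHsub μ
    omega
  rw [heq, Finsupp.add_apply, Finsupp.add_apply, Finsupp.smul_apply,
    Finsupp.single_apply, if_neg htopne, Finsupp.mapDomain_apply hHsubInj, hOμ]
  simp only [Finsupp.add_apply, Finsupp.smul_apply, Finsupp.neg_apply,
    Finsupp.mapRange_apply, smul_eq_mul, mul_zero, zero_add, add_zero, hkZ, hlZ]
  rw [hs₁, ht₁, pow_mul, pow_mul, pow_succ]
  ring
end

section
/- Fix a nonzero eigenvalue λ_α ∈ σ(−Δ_M), set d_W = dim 𝒲(λ_α) and d_V = dim V_{−Δ_M}(λ_α), and let H_α = {exp(φ) ∈ 𝕋 : α(φ) ∈ 2πℤ}. Then the coefficient of χ_𝕋(𝕋/H_α⁺) in the bifurcation index at λ_α equals BIF_𝕋(λ_α)_{H_α} = (−1)^{(d_W+d_V)n_− + 1} · n_−. -/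
/-!
Each factor of `BIF_𝕋(λ_α)` has no full-dimensional generator besides `𝕀`. Since
`χ_𝕋(𝕋/H⁺) ⋆ χ_𝕋(𝕋/K⁺)` contributes only at `H ∩ K` and only when
`dim H + dim K = dim 𝕋 + dim (H ∩ K)`, on such elements the coefficients of a product are
`(x ⋆ y)_𝕋 = x_𝕋 y_𝕋` and `(x ⋆ y)_K = x_𝕋 y_K + x_K y_𝕋` for `K` of codimension one, whence
`(x^n)_K = n x_𝕋^{n-1} x_K`. The expansions give `(deg_V)_𝕋 = ±1`, `(deg_V)_{H_α} = -(deg_V)_𝕋`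
and `(deg_W)_{H_α} = 0`, so only `(deg_W^n)_𝕋 (deg_V^n)_{H_α} = -n₋ (deg_W)_𝕋^{n₋} (deg_V)_𝕋^{n₋}`
survives.
-/

open Classical in
theorem Finsupp.sum_sum_ite_and_eq_mul {α R : Type*} [Semiring R] (x y : α →₀ R) (a b : α) :
    (x.sum fun H c => y.sum fun K d => if H = a ∧ K = b then c * d else 0) = x a * y b := by
  have inner : ∀ H c, (y.sum fun K d => if H = a ∧ K = b then c * d else 0) =
      if H = a then c * y b else 0 := by
    intro H c
    by_cases h : H = a <;> simp +contextual [h]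
  simp +contextual [inner]

section EulerRing

variable {Sub : Type*} {dimT : ℕ} {dim : Sub → ℕ} {inter : Sub → Sub → Sub} {top : Sub}

open Classical in
theorem eulerMul_apply (x y : Sub →₀ ℤ) (s : Sub) :
    eulerMul dimT dim inter x y s =
      x.sum fun H c => y.sum fun K d =>
        if dim H + dim K = dimT + dim (inter H K) ∧ inter H K = s then c * d else 0 := by
  simp only [eulerMul, Finsupp.sum_apply, apply_ite (fun z : Sub →₀ ℤ => z s),
    Finsupp.single_apply, Finsupp.zero_apply, ite_and]

variable (dimT dim top) in
def FullDimAtTop (x : Sub →₀ ℤ) : Prop :=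
  ∀ H, dim H = dimT → H ≠ top → x H = 0

theorem FullDimAtTop.eq_top {x : Sub →₀ ℤ} (hx : FullDimAtTop dimT dim top x) {H : Sub}
    (hH : x H ≠ 0) (hdimH : dim H = dimT) : H = top :=
  not_not.mp fun hne => hH (hx H hdimH hne)

theorem FullDimAtTop.single_top : FullDimAtTop dimT dim top (Finsupp.single top 1) :=
  fun _ _ hne => Finsupp.single_eq_of_ne hne

theorem FullDimAtTop.sub {x y : Sub →₀ ℤ} (hx : FullDimAtTop dimT dim top x)
    (hy : FullDimAtTop dimT dim top y) : FullDimAtTop dimT dim top (x - y) := fun H hH hne => by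
  rw [Finsupp.sub_apply, hx H hH hne, hy H hH hne, sub_zero]

theorem ne_top_of_codim_one (hdimtop : dim top = dimT) {s : Sub} (hs : dim s + 1 = dimT) :
    s ≠ top := by
  rintro rfl
  omega

theorem eulerMul_term_iff_of_dim_eq (hdim : ∀ H, dim H ≤ dimT) (hdimtop : dim top = dimT)
    (hinter_top : ∀ H, inter top H = H) {x y : Sub →₀ ℤ}
    (hx : FullDimAtTop dimT dim top x) (hy : FullDimAtTop dimT dim top y)
    {H K s : Sub} (hH : x H ≠ 0) (hK : y K ≠ 0) (hs : dim s = dimT) :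
    (dim H + dim K = dimT + dim (inter H K) ∧ inter H K = s) ↔
      H = top ∧ K = top ∧ s = top := by
  constructor
  · rintro ⟨hsum, rfl⟩
    have := hdim H
    have := hdim K
    have hHtop := hx.eq_top hH (by omega)
    have hKtop := hy.eq_top hK (by omega)
    subst hHtop hKtop
    exact ⟨rfl, rfl, hinter_top _⟩
  · rintro ⟨rfl, rfl, rfl⟩
    rw [hinter_top, hdimtop]
    exact ⟨rfl, rfl⟩

theorem eulerMul_term_iff_of_codim_one (hdim : ∀ H, dim H ≤ dimT) (hdimtop : dim top = dimT)
    (hinter_top : ∀ H, inter top H = H) (hinter_top' : ∀ H, inter H top = H)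
    {x y : Sub →₀ ℤ} (hx : FullDimAtTop dimT dim top x) (hy : FullDimAtTop dimT dim top y)
    {H K s : Sub} (hH : x H ≠ 0) (hK : y K ≠ 0) (hs : dim s + 1 = dimT) :
    (dim H + dim K = dimT + dim (inter H K) ∧ inter H K = s) ↔
      (H = top ∧ K = s) ∨ (H = s ∧ K = top) := by
  constructor
  · rintro ⟨hsum, rfl⟩
    have := hdim H
    have := hdim K
    by_cases hdimH : dim H = dimT
    · obtain rfl := hx.eq_top hH hdimH
      exact Or.inl ⟨rfl, (hinter_top K).symm⟩
    · obtain rfl := hy.eq_top hK (by omega)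
      exact Or.inr ⟨(hinter_top' H).symm, rfl⟩
  · rintro (⟨rfl, rfl⟩ | ⟨rfl, rfl⟩)
    · rw [hinter_top, hdimtop]
      exact ⟨rfl, rfl⟩
    · rw [hinter_top', hdimtop]
      exact ⟨add_comm _ _, rfl⟩

open Classical in
theorem eulerMul_apply_of_dim_eq (hdim : ∀ H, dim H ≤ dimT) (hdimtop : dim top = dimT)
    (hinter_top : ∀ H, inter top H = H) {x y : Sub →₀ ℤ}
    (hx : FullDimAtTop dimT dim top x) (hy : FullDimAtTop dimT dim top y)
    {s : Sub} (hs : dim s = dimT) :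
    eulerMul dimT dim inter x y s = if s = top then x top * y top else 0 := by
  have hterm H (hH : H ∈ x.support) K (hK : K ∈ y.support) :=
    eulerMul_term_iff_of_dim_eq (inter := inter) hdim hdimtop hinter_top hx hy
      (Finsupp.mem_support_iff.mp hH) (Finsupp.mem_support_iff.mp hK) hs
  calc eulerMul dimT dim inter x y s
      = x.sum fun H c => y.sum fun K d => if H = top ∧ K = top ∧ s = top then c * d else 0 :=
        (eulerMul_apply x y s).trans <| Finsupp.sum_congr fun H hH =>
          Finsupp.sum_congr fun K hK => if_congr (hterm H hH K hK) rfl rfl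
    _ = if s = top then x top * y top else 0 := by
      split_ifs with hstop
      · simp only [hstop, and_true, Finsupp.sum_sum_ite_and_eq_mul]
      · simp [hstop]

open Classical in
theorem eulerMul_apply_of_codim_one (hdim : ∀ H, dim H ≤ dimT) (hdimtop : dim top = dimT)
    (hinter_top : ∀ H, inter top H = H) (hinter_top' : ∀ H, inter H top = H)
    {x y : Sub →₀ ℤ} (hx : FullDimAtTop dimT dim top x) (hy : FullDimAtTop dimT dim top y)
    {s : Sub} (hs : dim s + 1 = dimT) :
    eulerMul dimT dim inter x y s = x top * y s + x s * y top := by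
  have hterm H (hH : H ∈ x.support) K (hK : K ∈ y.support) :=
    eulerMul_term_iff_of_codim_one hdim hdimtop hinter_top hinter_top' hx hy
      (Finsupp.mem_support_iff.mp hH) (Finsupp.mem_support_iff.mp hK) hs
  have hstop := ne_top_of_codim_one hdimtop hs
  have hsplit H K (c : ℤ) :
      (if (H = top ∧ K = s) ∨ (H = s ∧ K = top) then c else 0) =
        (if H = top ∧ K = s then c else 0) + (if H = s ∧ K = top then c else 0) := by
    by_cases h : H = top ∧ K = s
    · have h' : ¬ (H = s ∧ K = top) := fun h' => hstop (h'.1.symm.trans h.1)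
      rw [if_pos (Or.inl h), if_pos h, if_neg h', add_zero]
    · simp only [h, false_or, if_false, zero_add]
  calc eulerMul dimT dim inter x y s
      = x.sum fun H c => y.sum fun K d =>
          (if H = top ∧ K = s then c * d else 0) + (if H = s ∧ K = top then c * d else 0) :=
        (eulerMul_apply x y s).trans <| Finsupp.sum_congr fun H hH =>
          Finsupp.sum_congr fun K hK => (if_congr (hterm H hH K hK) rfl rfl).trans (hsplit H K _)
    _ = x top * y s + x s * y top := by
      simp only [Finsupp.sum_add, Finsupp.sum_sum_ite_and_eq_mul]

theorem FullDimAtTop.eulerMul (hdim : ∀ H, dim H ≤ dimT) (hdimtop : dim top = dimT)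
    (hinter_top : ∀ H, inter top H = H) {x y : Sub →₀ ℤ}
    (hx : FullDimAtTop dimT dim top x) (hy : FullDimAtTop dimT dim top y) :
    FullDimAtTop dimT dim top (eulerMul dimT dim inter x y) := fun _ hH hne => by
  rw [eulerMul_apply_of_dim_eq hdim hdimtop hinter_top hx hy hH, if_neg hne]

theorem eulerMul_apply_top (hdim : ∀ H, dim H ≤ dimT) (hdimtop : dim top = dimT)
    (hinter_top : ∀ H, inter top H = H) {x y : Sub →₀ ℤ}
    (hx : FullDimAtTop dimT dim top x) (hy : FullDimAtTop dimT dim top y) :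
    eulerMul dimT dim inter x y top = x top * y top := by
  rw [eulerMul_apply_of_dim_eq hdim hdimtop hinter_top hx hy hdimtop, if_pos rfl]

theorem FullDimAtTop.eulerPow (hdim : ∀ H, dim H ≤ dimT) (hdimtop : dim top = dimT)
    (hinter_top : ∀ H, inter top H = H) {x : Sub →₀ ℤ} (hx : FullDimAtTop dimT dim top x)
    (n : ℕ) : FullDimAtTop dimT dim top (eulerPow dimT dim inter top x n) := by
  induction n with
  | zero => exact FullDimAtTop.single_top
  | succ n ih => exact hx.eulerMul hdim hdimtop hinter_top ih

theorem eulerPow_apply_top (hdim : ∀ H, dim H ≤ dimT) (hdimtop : dim top = dimT)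
    (hinter_top : ∀ H, inter top H = H) {x : Sub →₀ ℤ} (hx : FullDimAtTop dimT dim top x)
    (n : ℕ) : eulerPow dimT dim inter top x n top = x top ^ n := by
  induction n with
  | zero => simp [eulerPow]
  | succ n ih =>
    rw [eulerPow, eulerMul_apply_top hdim hdimtop hinter_top hx
      (hx.eulerPow hdim hdimtop hinter_top n), ih, pow_succ']

theorem eulerPow_apply_of_codim_one (hdim : ∀ H, dim H ≤ dimT) (hdimtop : dim top = dimT)
    (hinter_top : ∀ H, inter top H = H) (hinter_top' : ∀ H, inter H top = H)
    {x : Sub →₀ ℤ} (hx : FullDimAtTop dimT dim top x) {s : Sub} (hs : dim s + 1 = dimT)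
    (n : ℕ) : eulerPow dimT dim inter top x n s = n * x top ^ (n - 1) * x s := by
  induction n with
  | zero => simp [eulerPow, Finsupp.single_eq_of_ne (ne_top_of_codim_one hdimtop hs)]
  | succ n ih =>
    rw [eulerPow, eulerMul_apply_of_codim_one hdim hdimtop hinter_top hinter_top' hx
      (hx.eulerPow hdim hdimtop hinter_top n) hs, ih,
      eulerPow_apply_top hdim hdimtop hinter_top hx]
    rcases n with _ | n
    · simp
    · simp only [Nat.add_sub_cancel]
      push_cast
      ring

end EulerRing

theorem lowDim.apply_eq_zero {Sub : Type*} {dimT : ℕ} {dim : Sub → ℕ} {O : Sub →₀ ℤ}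
    (hO : lowDim dimT dim O) {H : Sub} (hH : dimT ≤ dim H + 1) : O H = 0 :=
  Finsupp.notMem_support_iff.mp fun hmem => by
    have := hO H hmem
    omega

section Expansion

variable {Sub Mw : Type*} {dimT : ℕ} {dim : Sub → ℕ} {top : Sub} {Hsub : Mw → Sub}

noncomputable def weightSum (Hsub : Mw → Sub) (mult : Mw →₀ ℕ) : Sub →₀ ℤ :=
  mult.sum fun ν n => (n : ℤ) • Finsupp.single (Hsub ν) 1

theorem weightSum_apply_of_notMem_range (mult : Mw →₀ ℕ) {H : Sub}
    (hH : H ∉ Set.range Hsub) : weightSum Hsub mult H = 0 := by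
  have hne ν : H ≠ Hsub ν := fun h => hH ⟨ν, h.symm⟩
  simp [weightSum, Finsupp.sum_apply, Finsupp.single_eq_of_ne, hne]

theorem weightSum_apply_of_injective (hinj : Function.Injective Hsub) (mult : Mw →₀ ℕ)
    (α : Mw) : weightSum Hsub mult (Hsub α) = mult α := by
  classical
  simp +contextual [weightSum, Finsupp.sum_apply, Finsupp.single_apply, hinj.eq_iff]

variable {x O : Sub →₀ ℤ} {ε : ℤ} {mult : Mw →₀ ℕ}

theorem expansion_apply_of_dim_eq (hHsub : ∀ ν, dim (Hsub ν) + 1 = dimT)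
    (hO : lowDim dimT dim O)
    (hx : x = ε • (Finsupp.single top 1 - weightSum Hsub mult) + O) {H : Sub}
    (hH : dim H = dimT) : x H = ε * Finsupp.single top 1 H := by
  have hHrange : H ∉ Set.range Hsub := by
    rintro ⟨ν, rfl⟩
    have := hHsub ν
    omega
  rw [hx, Finsupp.add_apply, Finsupp.smul_apply, Finsupp.sub_apply,
    weightSum_apply_of_notMem_range mult hHrange, hO.apply_eq_zero (by omega), sub_zero,
    add_zero, smul_eq_mul]

theorem FullDimAtTop.of_expansion (hHsub : ∀ ν, dim (Hsub ν) + 1 = dimT)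
    (hO : lowDim dimT dim O)
    (hx : x = ε • (Finsupp.single top 1 - weightSum Hsub mult) + O) :
    FullDimAtTop dimT dim top x := fun _ hH hne => by
  rw [expansion_apply_of_dim_eq hHsub hO hx hH, Finsupp.single_eq_of_ne hne, mul_zero]

theorem expansion_apply_top (hdimtop : dim top = dimT) (hHsub : ∀ ν, dim (Hsub ν) + 1 = dimT)
    (hO : lowDim dimT dim O)
    (hx : x = ε • (Finsupp.single top 1 - weightSum Hsub mult) + O) : x top = ε := by
  rw [expansion_apply_of_dim_eq hHsub hO hx hdimtop, Finsupp.single_eq_same, mul_one]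

theorem expansion_apply_Hsub (hdimtop : dim top = dimT) (hHsub : ∀ ν, dim (Hsub ν) + 1 = dimT)
    (hinj : Function.Injective Hsub) (hO : lowDim dimT dim O)
    (hx : x = ε • (Finsupp.single top 1 - weightSum Hsub mult) + O) (α : Mw) :
    x (Hsub α) = -(ε * mult α) := by
  rw [hx, Finsupp.add_apply, Finsupp.smul_apply, Finsupp.sub_apply,
    Finsupp.single_eq_of_ne (ne_top_of_codim_one hdimtop (hHsub α)),
    weightSum_apply_of_injective hinj,
    hO.apply_eq_zero (by have := hHsub α; omega), add_zero, smul_eq_mul, zero_sub, mul_neg]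

end Expansion

theorem statement15_general
    -- the closed subgroups of the torus 𝕋, their dimensions and intersections
    (Sub : Type*) (dimT : ℕ) (dim : Sub → ℕ) (hdim : ∀ H, dim H ≤ dimT)
    (inter : Sub → Sub → Sub)
    (top : Sub) (hdimtop : dim top = dimT)
    (hinter_top : ∀ H, inter top H = H) (hinter_top' : ∀ H, inter H top = H)
    -- ℳ: the chosen set of nonzero restricted weights and μ ↦ H_μ
    (Mw : Type*) (Hsub : Mw → Sub)
    (hHsub : ∀ ν, dim (Hsub ν) + 1 = dimT)
    (hHsubInj : Function.Injective Hsub)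
    -- the coefficients a_i ∈ {−1,1} of the system; n₋ = #{i : a_i = −1}
    (p : ℕ) (a : Fin p → ℝ)
    -- a fixed nonzero eigenvalue λ_α of −Δ_M with restricted highest weight α ∈ ℳ
    (lamA : ℝ)
    (alpha : Mw)
    -- multiplicities of ℝ[1,0] and ℝ[1,μ] in V_{−Δ_M}(λ_α) and 𝒲(λ_α)
    (multV0 : ℕ) (multV : Mw →₀ ℕ) (multW0 : ℕ) (multW : Mw →₀ ℕ)
    -- ℝ[1,α] occurs with multiplicity 1 in V_{−Δ_M}(λ_α) and 0 in 𝒲(λ_α)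
    (hmultV : multV alpha = 1) (hmultW : multW alpha = 0)
    -- degV = χ_𝕋(S^{V_{−Δ_M}(λ_α)}), degW = χ_𝕋(S^{𝒲(λ_α)}), with their
    -- expansions from Theorem UTnmult
    (degV degW : Sub →₀ ℤ)
    (hdegV : ∃ O : Sub →₀ ℤ, lowDim dimT dim O ∧
      degV = (-1 : ℤ) ^ multV0 • (Finsupp.single top 1
        - multV.sum fun ν n => (n : ℤ) • Finsupp.single (Hsub ν) 1) + O)
    (hdegW : ∃ O : Sub →₀ ℤ, lowDim dimT dim O ∧
      degW = (-1 : ℤ) ^ multW0 • (Finsupp.single top 1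
        - multW.sum fun ν n => (n : ℤ) • Finsupp.single (Hsub ν) 1) + O)
    -- the bifurcation index and its product formula (Lemma `indices` (1))
    (BIF : ℝ → (Sub →₀ ℤ))
    (hBIFeq : BIF lamA =
      eulerMul dimT dim inter
        (eulerPow dimT dim inter top degW (Finset.univ.filter fun i => a i = -1).card)
        (eulerPow dimT dim inter top degV (Finset.univ.filter fun i => a i = -1).card
          - Finsupp.single top 1)) :
    -- BIF_𝕋(λ_α)_{H_α} = (−1)^{(d_W + d_V) n₋ + 1} n₋
    (BIF lamA) (Hsub alpha)
      = (-1 : ℤ) ^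
          (((multW0 + 2 * multW.sum fun _ n => n) + (multV0 + 2 * multV.sum fun _ n => n))
              * (Finset.univ.filter fun i => a i = -1).card + 1)
        * ((Finset.univ.filter fun i => a i = -1).card : ℤ) := by
  obtain ⟨OV, hOV, hV⟩ := hdegV
  obtain ⟨OW, hOW, hW⟩ := hdegW
  set n := (Finset.univ.filter fun i => a i = -1).card
  have hVfull := FullDimAtTop.of_expansion hHsub hOV hV
  have hWfull := FullDimAtTop.of_expansion hHsub hOW hW
  have hcodim := hHsub alpha
  have hpowV : (n : ℤ) * ((-1) ^ multV0) ^ (n - 1) * (-1) ^ multV0 = n * ((-1) ^ multV0) ^ n := by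
    rcases Nat.eq_zero_or_pos n with hn | hn
    · simp [hn]
    · rw [mul_assoc, pow_sub_one_mul hn.ne']
  have hsign : (-1 : ℤ) ^ (((multW0 + 2 * multW.sum fun _ n => n) +
      (multV0 + 2 * multV.sum fun _ n => n)) * n + 1) =
        -(((-1) ^ multW0) ^ n * ((-1) ^ multV0) ^ n) := by
    simp [pow_succ, pow_add, add_mul, pow_mul, mul_assoc]
  rw [hBIFeq, eulerMul_apply_of_codim_one hdim hdimtop hinter_top hinter_top'
      (hWfull.eulerPow hdim hdimtop hinter_top n)
      ((hVfull.eulerPow hdim hdimtop hinter_top n).sub .single_top) hcodim,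
    Finsupp.sub_apply, Finsupp.sub_apply, Finsupp.single_eq_same,
    Finsupp.single_eq_of_ne (ne_top_of_codim_one hdimtop hcodim),
    eulerPow_apply_top hdim hdimtop hinter_top hWfull,
    eulerPow_apply_top hdim hdimtop hinter_top hVfull,
    eulerPow_apply_of_codim_one hdim hdimtop hinter_top hinter_top' hWfull hcodim,
    eulerPow_apply_of_codim_one hdim hdimtop hinter_top hinter_top' hVfull hcodim,
    expansion_apply_top hdimtop hHsub hOW hW, expansion_apply_top hdimtop hHsub hOV hV,
    expansion_apply_Hsub hdimtop hHsub hHsubInj hOW hW,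
    expansion_apply_Hsub hdimtop hHsub hHsubInj hOV hV,
    hmultV, hmultW, hsign]
  linear_combination (-((-1 : ℤ) ^ multW0) ^ n) * hpowV

theorem statement15
    -- the closed subgroups of the torus 𝕋, their dimensions and intersections
    (Sub : Type*) (dimT : ℕ) (dim : Sub → ℕ) (hdim : ∀ H, dim H ≤ dimT)
    (inter : Sub → Sub → Sub)
    (hinter_left : ∀ H K, dim (inter H K) ≤ dim H)
    (hinter_right : ∀ H K, dim (inter H K) ≤ dim K)
    (top : Sub) (hdimtop : dim top = dimT)
    (hinter_top : ∀ H, inter top H = H) (hinter_top' : ∀ H, inter H top = H)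
    -- ℳ: the chosen set of nonzero restricted weights and μ ↦ H_μ
    (Mw : Type*) (Hsub : Mw → Sub)
    (hHsub : ∀ ν, dim (Hsub ν) + 1 = dimT)
    (hHsubInj : Function.Injective Hsub)
    -- the coefficients a_i ∈ {−1,1} of the system; n₋ = #{i : a_i = −1}
    (p : ℕ) (hp : 0 < p) (a : Fin p → ℝ) (ha : ∀ i, a i = 1 ∨ a i = -1)
    -- a fixed nonzero eigenvalue λ_α of −Δ_M with restricted highest weight α ∈ ℳ
    (spec : Set ℝ) (lamA : ℝ) (hlamA : lamA ∈ spec) (hlamA0 : lamA ≠ 0)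
    (alpha : Mw)
    -- multiplicities of ℝ[1,0] and ℝ[1,μ] in V_{−Δ_M}(λ_α) and 𝒲(λ_α)
    (multV0 : ℕ) (multV : Mw →₀ ℕ) (multW0 : ℕ) (multW : Mw →₀ ℕ)
    -- ℝ[1,α] occurs with multiplicity 1 in V_{−Δ_M}(λ_α) and 0 in 𝒲(λ_α)
    (hmultV : multV alpha = 1) (hmultW : multW alpha = 0)
    -- degV = χ_𝕋(S^{V_{−Δ_M}(λ_α)}), degW = χ_𝕋(S^{𝒲(λ_α)}), with their
    -- expansions from Theorem UTnmult
    (degV degW : Sub →₀ ℤ)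
    (hdegV : ∃ O : Sub →₀ ℤ, lowDim dimT dim O ∧
      degV = (-1 : ℤ) ^ multV0 • (Finsupp.single top 1
        - multV.sum fun ν n => (n : ℤ) • Finsupp.single (Hsub ν) 1) + O)
    (hdegW : ∃ O : Sub →₀ ℤ, lowDim dimT dim O ∧
      degW = (-1 : ℤ) ^ multW0 • (Finsupp.single top 1
        - multW.sum fun ν n => (n : ℤ) • Finsupp.single (Hsub ν) 1) + O)
    -- the bifurcation index and its product formula (Lemma `indices` (1))
    (BIF : ℝ → (Sub →₀ ℤ))
    (hBIFeq : BIF lamA =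
      eulerMul dimT dim inter
        (eulerPow dimT dim inter top degW (Finset.univ.filter fun i => a i = -1).card)
        (eulerPow dimT dim inter top degV (Finset.univ.filter fun i => a i = -1).card
          - Finsupp.single top 1)) :
    -- BIF_𝕋(λ_α)_{H_α} = (−1)^{(d_W + d_V) n₋ + 1} n₋
    (BIF lamA) (Hsub alpha)
      = (-1 : ℤ) ^
          (((multW0 + 2 * multW.sum fun _ n => n) + (multV0 + 2 * multV.sum fun _ n => n))
              * (Finset.univ.filter fun i => a i = -1).card + 1)
        * ((Finset.univ.filter fun i => a i = -1).card : ℤ) :=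
  statement15_general Sub dimT dim hdim inter top hdimtop hinter_top hinter_top' Mw Hsub hHsub
    hHsubInj p a lamA alpha multV0 multV multW0 multW hmultV hmultW degV degW hdegV hdegW BIF hBIFeq
end
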